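/- Let $\mathbf{e}_k = \mathbf{Y}_k \mathbf{e}_{k-1}$ where $\mathbf{Y}_1,\dots,\mathbf{Y}_k$ are i.i.d. copies of a random $n\times n$ matrix $\mathbf{Y}$, independent of the deterministic initial vector $\mathbf{e}_0 \in \mathbb{R}^n$. For each positive integer $p$, define $\mu_p = \|\mathbb{E}[(\mathbf{Y}^\top\mathbf{Y})^{\otimes p}]\|$ (operator norm of the expected $p$-fold Kronecker power). Then $\mathbb{E}\|\mathbf{e}_k\|^{2p} \le \mu_p^k \cdot \|\mathbf{e}_0\|^{2p}$. -/

import Mathlib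

open MeasureTheory ProbabilityTheory Matrix Metric
open scoped Kronecker

instance matMS {ι κ : Type*} : MeasurableSpace (Matrix ι κ ℝ) :=
  inferInstanceAs (MeasurableSpace (ι → κ → ℝ))

/-- Operator norm (ℓ² → ℓ²) of a square real matrix. -/
noncomputable def opNorm {ι : Type*} [Fintype ι] [DecidableEq ι] (M : Matrix ι ι ℝ) : ℝ :=
  ‖Matrix.toEuclideanCLM (𝕜 := ℝ) M‖

/-- Entrywise expectation of a random matrix. -/
noncomputable def Emat {Ω : Type*} [MeasurableSpace Ω] (μ : Measure Ω)
    {ι κ : Type*} (X : Ω → Matrix ι κ ℝ) : Matrix ι κ ℝ :=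
  Matrix.of fun i j => ∫ ω, X ω i j ∂μ

/-- A square real matrix acting on Euclidean space. -/
noncomputable def matCLM {n : ℕ} (M : Matrix (Fin n) (Fin n) ℝ) :
    EuclideanSpace ℝ (Fin n) →L[ℝ] EuclideanSpace ℝ (Fin n) :=
  Matrix.toEuclideanCLM (𝕜 := ℝ) M

/-- `p`-fold Kronecker (tensor) power of a square matrix, indexed by `Fin p → Fin n`. -/
noncomputable def kpow {n : ℕ} (M : Matrix (Fin n) (Fin n) ℝ) (p : ℕ) :
    Matrix (Fin p → Fin n) (Fin p → Fin n) ℝ :=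
  Matrix.of fun f g => ∏ j, M (f j) (g j)

/-!
By the kernel trick and the mixed-product property,
`‖A v‖^{2p} = (‖A v‖²)^p = ⟨(AᵀA)^{⊗p} v^{⊗p}, v^{⊗p}⟩`, a quadratic form in the tensor power
`v^{⊗p}`, whose norm is `‖v‖^p`. Since `e_{j-1}` is a function of `Y_1, …, Y_{j-1}`, it is
independent of `Y_j`, so taking expectations replaces `(Y_jᵀY_j)^{⊗p}` by its mean `M`, and
`⟨M w, w⟩ ≤ ‖M‖ ‖w‖²` gives `𝔼‖e_j‖^{2p} ≤ μ_p 𝔼‖e_{j-1}‖^{2p}`. Iterating gives the bound.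
-/

section TensorPower

variable {ι : Type*}

noncomputable def tensorPow (v : EuclideanSpace ℝ ι) (p : ℕ) : EuclideanSpace ℝ (Fin p → ι) :=
  WithLp.toLp 2 fun f => ∏ j, v (f j)

@[simp]
lemma tensorPow_apply (v : EuclideanSpace ℝ ι) (p : ℕ) (f : Fin p → ι) :
    tensorPow v p f = ∏ j, v (f j) := rfl

lemma norm_tensorPow [Fintype ι] (v : EuclideanSpace ℝ ι) (p : ℕ) : ‖tensorPow v p‖ = ‖v‖ ^ p := by
  have h : ‖tensorPow v p‖ ^ 2 = (‖v‖ ^ p) ^ 2 := by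
    rw [← pow_mul, mul_comm, pow_mul, EuclideanSpace.real_norm_sq_eq,
      EuclideanSpace.real_norm_sq_eq, Fintype.sum_pow]
    simp only [tensorPow_apply, Finset.prod_pow]
  exact (pow_left_inj₀ (norm_nonneg _) (by positivity) two_ne_zero).mp h

lemma measurable_tensorPow_mul_tensorPow [Fintype ι] {p : ℕ} (f g : Fin p → ι) :
    Measurable fun v : EuclideanSpace ℝ ι => tensorPow v p f * tensorPow v p g := by
  simp only [tensorPow_apply]
  fun_prop

lemma sum_sum_mul_le_opNorm_mul_norm_sq [Fintype ι] [DecidableEq ι] (M : Matrix ι ι ℝ)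
    (w : EuclideanSpace ℝ ι) : ∑ f, ∑ g, M f g * (w f * w g) ≤ opNorm M * ‖w‖ ^ 2 := by
  have h : ∑ f, ∑ g, M f g * (w f * w g) = inner ℝ w (Matrix.toEuclideanCLM (𝕜 := ℝ) M w) := by
    simp only [Matrix.inner_toEuclideanCLM, dotProduct, mulVec, Finset.mul_sum]
    exact Finset.sum_congr rfl fun f _ => Finset.sum_congr rfl fun g _ => by ring
  calc ∑ f, ∑ g, M f g * (w f * w g)
      ≤ ‖w‖ * ‖Matrix.toEuclideanCLM (𝕜 := ℝ) M w‖ := h ▸ real_inner_le_norm _ _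
    _ ≤ ‖w‖ * (opNorm M * ‖w‖) := by gcongr; exact (Matrix.toEuclideanCLM (𝕜 := ℝ) M).le_opNorm w
    _ = opNorm M * ‖w‖ ^ 2 := by ring

end TensorPower

section KroneckerPower

variable {n : ℕ}

lemma norm_matCLM_sq (A : Matrix (Fin n) (Fin n) ℝ) (v : EuclideanSpace ℝ (Fin n)) :
    ‖matCLM A v‖ ^ 2 = ∑ q : Fin n × Fin n, (Aᵀ * A) q.1 q.2 * (v q.1 * v q.2) := by
  have hcoord : ∀ i, matCLM A v i = ∑ a, A i a * v a := fun i => rfl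
  rw [EuclideanSpace.real_norm_sq_eq, Fintype.sum_prod_type]
  simp only [hcoord, sq, Matrix.mul_apply, Matrix.transpose_apply, Finset.sum_mul,
    Finset.mul_sum]
  rw [Finset.sum_comm]
  refine Finset.sum_congr rfl fun a _ => ?_
  rw [Finset.sum_comm]
  exact Finset.sum_congr rfl fun b _ => Finset.sum_congr rfl fun i _ => by ring

lemma norm_matCLM_pow_eq_sum_kpow (A : Matrix (Fin n) (Fin n) ℝ) (v : EuclideanSpace ℝ (Fin n))
    (p : ℕ) : ‖matCLM A v‖ ^ (2 * p) = ∑ f, ∑ g,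
      kpow (Aᵀ * A) p f g * (tensorPow v p f * tensorPow v p g) := by
  rw [pow_mul, norm_matCLM_sq, Fintype.sum_pow,
    ← (Equiv.arrowProdEquivProdArrow (Fin p) (fun _ => Fin n) (fun _ => Fin n)).symm.sum_comp,
    Fintype.sum_prod_type]
  simp only [kpow, Matrix.of_apply, tensorPow_apply, ← Finset.prod_mul_distrib]
  rfl

lemma measurable_kpow_gram_apply (p : ℕ) (f g : Fin p → Fin n) :
    Measurable fun A : Matrix (Fin n) (Fin n) ℝ => kpow (Aᵀ * A) p f g := by
  simp only [kpow, Matrix.of_apply, Matrix.mul_apply, Matrix.transpose_apply]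
  fun_prop

lemma Measurable.matCLM_apply {α : Type*} {mα : MeasurableSpace α}
    {X : α → Matrix (Fin n) (Fin n) ℝ} {V : α → EuclideanSpace ℝ (Fin n)} (hX : Measurable X)
    (hV : Measurable V) : Measurable fun a => matCLM (X a) (V a) := by
  refine (WithLp.measurable_toLp 2 _).comp (measurable_pi_lambda _ fun i => ?_)
  change Measurable fun a => ∑ j, X a i j * V a j
  fun_prop

lemma measurable_kpow_gram (p : ℕ) :
    Measurable fun A : Matrix (Fin n) (Fin n) ℝ => kpow (Aᵀ * A) p :=
  measurable_pi_lambda _ fun f => measurable_pi_lambda _ fun g => measurable_kpow_gram_apply p f g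

end KroneckerPower

section IndependentStep

variable {Ω : Type*} [MeasurableSpace Ω] {μ : Measure Ω} {n p : ℕ}
  {X : Ω → Matrix (Fin n) (Fin n) ℝ} {V : Ω → EuclideanSpace ℝ (Fin n)}

lemma integrable_tensorPow_mul_tensorPow (hV : AEMeasurable V μ)
    (hVint : Integrable (fun ω => ‖V ω‖ ^ (2 * p)) μ) (f g : Fin p → Fin n) :
    Integrable (fun ω => tensorPow (V ω) p f * tensorPow (V ω) p g) μ := by
  refine hVint.mono ((measurable_tensorPow_mul_tensorPow f g).comp_aemeasurable
    hV).aestronglyMeasurable (ae_of_all _ fun ω => ?_)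
  rw [norm_mul, pow_mul', ← norm_tensorPow, norm_pow, norm_norm, sq]
  exact mul_le_mul (PiLp.norm_apply_le _ _) (PiLp.norm_apply_le _ _) (norm_nonneg _) (norm_nonneg _)

lemma integrable_kpow_gram_mul_tensorPow (hXV : IndepFun X V μ) (hV : AEMeasurable V μ)
    (hXint : ∀ f g, Integrable (fun ω => kpow ((X ω)ᵀ * X ω) p f g) μ)
    (hVint : Integrable (fun ω => ‖V ω‖ ^ (2 * p)) μ) (f g : Fin p → Fin n) :
    Integrable (fun ω => kpow ((X ω)ᵀ * X ω) p f g *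
      (tensorPow (V ω) p f * tensorPow (V ω) p g)) μ :=
  (hXV.comp (measurable_kpow_gram_apply p f g) (measurable_tensorPow_mul_tensorPow f g)
    ).integrable_mul (hXint f g) (integrable_tensorPow_mul_tensorPow hV hVint f g)

lemma integrable_norm_matCLM_pow (hXV : IndepFun X V μ) (hV : AEMeasurable V μ)
    (hXint : ∀ f g, Integrable (fun ω => kpow ((X ω)ᵀ * X ω) p f g) μ)
    (hVint : Integrable (fun ω => ‖V ω‖ ^ (2 * p)) μ) :
    Integrable (fun ω => ‖matCLM (X ω) (V ω)‖ ^ (2 * p)) μ := by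
  simp only [norm_matCLM_pow_eq_sum_kpow]
  exact integrable_finsetSum _ fun f _ => integrable_finsetSum _ fun g _ =>
    integrable_kpow_gram_mul_tensorPow hXV hV hXint hVint f g

lemma integral_norm_matCLM_pow_le (hXV : IndepFun X V μ) (hX : AEMeasurable X μ)
    (hV : AEMeasurable V μ) (hXint : ∀ f g, Integrable (fun ω => kpow ((X ω)ᵀ * X ω) p f g) μ)
    (hVint : Integrable (fun ω => ‖V ω‖ ^ (2 * p)) μ) :
    ∫ ω, ‖matCLM (X ω) (V ω)‖ ^ (2 * p) ∂μ
      ≤ opNorm (Emat μ fun ω => kpow ((X ω)ᵀ * X ω) p) * ∫ ω, ‖V ω‖ ^ (2 * p) ∂μ := by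
  set M := Emat μ fun ω => kpow ((X ω)ᵀ * X ω) p
  have hT := integrable_tensorPow_mul_tensorPow hV hVint
  have hfactor : ∀ f g, ∫ ω, kpow ((X ω)ᵀ * X ω) p f g *
      (tensorPow (V ω) p f * tensorPow (V ω) p g) ∂μ
        = M f g * ∫ ω, tensorPow (V ω) p f * tensorPow (V ω) p g ∂μ := fun f g =>
    hXV.integral_fun_comp_mul_comp hX hV (measurable_kpow_gram_apply p f g).aestronglyMeasurable
      (measurable_tensorPow_mul_tensorPow f g).aestronglyMeasurable
  calc ∫ ω, ‖matCLM (X ω) (V ω)‖ ^ (2 * p) ∂μ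
      = ∑ f, ∑ g, M f g * ∫ ω, tensorPow (V ω) p f * tensorPow (V ω) p g ∂μ := by
        simp only [norm_matCLM_pow_eq_sum_kpow, ← hfactor]
        rw [integral_finsetSum _ fun f _ => integrable_finsetSum _ fun g _ =>
          integrable_kpow_gram_mul_tensorPow hXV hV hXint hVint f g]
        exact Finset.sum_congr rfl fun f _ => integral_finsetSum _ fun g _ =>
          integrable_kpow_gram_mul_tensorPow hXV hV hXint hVint f g
    _ = ∫ ω, ∑ f, ∑ g, M f g * (tensorPow (V ω) p f * tensorPow (V ω) p g) ∂μ := by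
        refine ((integral_finsetSum _ fun f _ => integrable_finsetSum _ fun g _ =>
          (hT f g).const_mul _).trans (Finset.sum_congr rfl fun f _ => ?_)).symm
        exact (integral_finsetSum _ fun g _ => (hT f g).const_mul _).trans
          (Finset.sum_congr rfl fun g _ => integral_const_mul _ _)
    _ ≤ ∫ ω, opNorm M * ‖V ω‖ ^ (2 * p) ∂μ := by
        refine integral_mono (integrable_finsetSum _ fun f _ => integrable_finsetSum _ fun g _ =>
          (hT f g).const_mul _) (hVint.const_mul _) fun ω => ?_
        rw [pow_mul', ← norm_tensorPow]
        exact sum_sum_mul_le_opNorm_mul_norm_sq M _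
    _ = opNorm M * ∫ ω, ‖V ω‖ ^ (2 * p) ∂μ := integral_const_mul _ _

end IndependentStep

lemma ProbabilityTheory.iIndepFun.indepFun_of_measurable_biSup {Ω ι β γ : Type*}
    [MeasurableSpace Ω] {μ : Measure Ω} [mβ : MeasurableSpace β] [MeasurableSpace γ]
    {Y : ι → Ω → β} (hY : iIndepFun Y μ) (hmeas : ∀ i, Measurable (Y i)) {S : Set ι} {j : ι}
    (hj : j ∉ S) {V : Ω → γ} (hV : Measurable[⨆ i ∈ S, mβ.comap (Y i)] V) :
    IndepFun (Y j) V μ := by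
  have h := indep_iSup_of_disjoint (fun i => (hmeas i).comap_le) hY.iIndep
    (Set.disjoint_singleton_left.mpr hj)
  rw [IndepFun_iff_Indep]
  exact indep_of_indep_of_le_right (indep_of_indep_of_le_left h
    (le_iSup₂ (f := fun i (_ : i ∈ ({j} : Set ι)) => mβ.comap (Y i)) j rfl)) hV.comap_le

lemma measurable_biSup_comap_of_matCLM_recurrence {Ω : Type*} {n k : ℕ}
    (Y : ℕ → Ω → Matrix (Fin n) (Fin n) ℝ) (e₀ : EuclideanSpace ℝ (Fin n))
    (e : ℕ → Ω → EuclideanSpace ℝ (Fin n)) (he0 : ∀ ω, e 0 ω = e₀)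
    (herec : ∀ ω, ∀ j, 1 ≤ j → j ≤ k → e j ω = matCLM (Y j ω) (e (j - 1) ω)) {m : ℕ}
    (hm : m ≤ k) : Measurable[⨆ i ∈ Set.Iic m, matMS.comap (Y i)] (e m) := by
  induction m with
  | zero => rw [funext he0]; exact measurable_const
  | succ m ih =>
    have hY : Measurable[⨆ i ∈ Set.Iic (m + 1), matMS.comap (Y i)] (Y (m + 1)) :=
      Measurable.of_comap_le (le_iSup₂ (f := fun i (_ : i ∈ Set.Iic (m + 1)) => matMS.comap (Y i))
        (m + 1) (Set.mem_Iic.mpr le_rfl))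
    have he : Measurable[⨆ i ∈ Set.Iic (m + 1), matMS.comap (Y i)] (e m) :=
      (ih (by omega)).mono
        (biSup_mono fun _ hi => Set.mem_Iic.mpr ((Set.mem_Iic.mp hi).trans m.le_succ)) le_rfl
    rw [show e (m + 1) = fun ω => matCLM (Y (m + 1) ω) (e m ω) from
      funext fun ω => herec ω (m + 1) (by omega) hm]
    exact hY.matCLM_apply he

lemma ProbabilityTheory.IdentDistrib.Emat_eq {Ω ι κ : Type*} [MeasurableSpace Ω]
    {μ : Measure Ω} {X X' : Ω → Matrix ι κ ℝ} (h : IdentDistrib X X' μ μ) :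
    Emat μ X = Emat μ X' := by
  ext i j
  exact (h.comp ((measurable_pi_apply j).comp (measurable_pi_apply i))).integral_eq

theorem stmt4_general {Ω : Type*} [MeasurableSpace Ω] (μ : Measure Ω) [IsProbabilityMeasure μ]
    {n : ℕ} (k p : ℕ) (Y : ℕ → Ω → Matrix (Fin n) (Fin n) ℝ)
    (hmeas : ∀ j, Measurable (Y j))
    (hindep : iIndepFun Y μ)
    (hident : ∀ j, μ.map (Y j) = μ.map (Y 1))
    (hint : ∀ f g, Integrable (fun ω => kpow ((Y 1 ω)ᵀ * Y 1 ω) p f g) μ)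
    (e₀ : EuclideanSpace ℝ (Fin n)) (e : ℕ → Ω → EuclideanSpace ℝ (Fin n))
    (he0 : ∀ ω, e 0 ω = e₀)
    (herec : ∀ ω, ∀ j, 1 ≤ j → j ≤ k → e j ω = matCLM (Y j ω) (e (j - 1) ω)) :
    ∫ ω, ‖e k ω‖ ^ (2 * p) ∂μ
      ≤ opNorm (Emat μ fun ω => kpow ((Y 1 ω)ᵀ * Y 1 ω) p) ^ k * ‖e₀‖ ^ (2 * p) := by
  set c := opNorm (Emat μ fun ω => kpow ((Y 1 ω)ᵀ * Y 1 ω) p) with hc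
  have hY : ∀ j, IdentDistrib (Y j) (Y 1) μ μ := fun j =>
    ⟨(hmeas j).aemeasurable, (hmeas 1).aemeasurable, hident j⟩
  have he : ∀ m ≤ k, Measurable[⨆ i ∈ Set.Iic m, matMS.comap (Y i)] (e m) := fun m hm =>
    measurable_biSup_comap_of_matCLM_recurrence Y e₀ e he0 herec hm
  suffices ∀ m ≤ k, Integrable (fun ω => ‖e m ω‖ ^ (2 * p)) μ ∧
      ∫ ω, ‖e m ω‖ ^ (2 * p) ∂μ ≤ c ^ m * ‖e₀‖ ^ (2 * p) from (this k le_rfl).2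
  intro m hm
  induction m with
  | zero => simp [he0]
  | succ m ih =>
    obtain ⟨hint_m, hle_m⟩ := ih (by omega)
    have hXV : IndepFun (Y (m + 1)) (e m) μ :=
      hindep.indepFun_of_measurable_biSup hmeas (by simp) (he m (by omega))
    have hV : AEMeasurable (e m) μ :=
      ((he m (by omega)).mono (iSup₂_le fun i _ => (hmeas i).comap_le) le_rfl).aemeasurable
    have hXint : ∀ f g, Integrable (fun ω => kpow ((Y (m + 1) ω)ᵀ * Y (m + 1) ω) p f g) μ :=
      fun f g => ((hY _).comp (measurable_kpow_gram_apply p f g)).integrable_iff.mpr (hint f g)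
    have hM : Emat μ (fun ω => kpow ((Y (m + 1) ω)ᵀ * Y (m + 1) ω) p)
        = Emat μ (fun ω => kpow ((Y 1 ω)ᵀ * Y 1 ω) p) :=
      ((hY _).comp (measurable_kpow_gram p)).Emat_eq
    have hstep := integral_norm_matCLM_pow_le hXV (hmeas _).aemeasurable hV hXint hint_m
    rw [hM, ← hc] at hstep
    rw [show e (m + 1) = fun ω => matCLM (Y (m + 1) ω) (e m ω) from
      funext fun ω => herec ω (m + 1) (by omega) hm, pow_succ', mul_assoc]
    exact ⟨integrable_norm_matCLM_pow hXV hV hXint hint_m,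
      hstep.trans (mul_le_mul_of_nonneg_left hle_m (norm_nonneg _))⟩

/-- Higher-moment bound: `𝔼‖e_k‖^{2p} ≤ μ_pᵏ ‖e₀‖^{2p}` with
`μ_p = ‖𝔼[(YᵀY)^{⊗p}]‖`. -/
theorem stmt4 {Ω : Type*} [MeasurableSpace Ω] (μ : Measure Ω) [IsProbabilityMeasure μ]
    {n : ℕ} (k p : ℕ) (hp : 0 < p) (Y : ℕ → Ω → Matrix (Fin n) (Fin n) ℝ)
    (hmeas : ∀ j, Measurable (Y j))
    (hindep : iIndepFun Y μ)
    (hident : ∀ j, μ.map (Y j) = μ.map (Y 1))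
    (hint : ∀ f g, Integrable (fun ω => kpow ((Y 1 ω)ᵀ * Y 1 ω) p f g) μ)
    (e₀ : EuclideanSpace ℝ (Fin n)) (e : ℕ → Ω → EuclideanSpace ℝ (Fin n))
    (he0 : ∀ ω, e 0 ω = e₀)
    (herec : ∀ ω, ∀ j, 1 ≤ j → j ≤ k → e j ω = matCLM (Y j ω) (e (j - 1) ω))
    (hintk : Integrable (fun ω => ‖e k ω‖ ^ (2 * p)) μ) :
    ∫ ω, ‖e k ω‖ ^ (2 * p) ∂μ
      ≤ opNorm (Emat μ fun ω => kpow ((Y 1 ω)ᵀ * Y 1 ω) p) ^ k * ‖e₀‖ ^ (2 * p) :=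
  stmt4_general μ k p Y hmeas hindep hident hint e₀ e he0 herec
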